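/- arXiv:2211.07972 — 8 statements merged into one kernel-verified Lean document; each statement's English description precedes it below -/
import Mathlib

section
/- Every topological space on a countable underlying set is c-well-filtered. -/
universe u

/-- A set is saturated if it equals the intersection of its open neighbourhoods. -/
def IsSaturatedSet {X : Type u} [TopologicalSpace X] (A : Set X) : Prop :=
  A = ⋂₀ {U : Set X | IsOpen U ∧ A ⊆ U}

/-- A family of sets is countably filtered (under `⊆`) if every countable subfamily
has a lower bound in the family. -/
def CntFilteredFam {X : Type u} (S : Set (Set X)) : Prop :=
  ∀ T ⊆ S, T.Countable → ∃ L ∈ S, ∀ t ∈ T, L ⊆ t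

/-- A family of sets is countably directed (under `⊆`) if every countable subfamily
has an upper bound in the family. -/
def CntDirectedFam {X : Type u} (S : Set (Set X)) : Prop :=
  ∀ T ⊆ S, T.Countable → ∃ U ∈ S, ∀ t ∈ T, t ⊆ U

/-- A space is c-well-filtered if for every countably filtered family of saturated
Lindelöf subsets whose intersection is contained in an open `U`, some member is contained in `U`. -/
def CWellFiltered (X : Type u) [TopologicalSpace X] : Prop :=
  ∀ S : Set (Set X), (∀ K ∈ S, IsSaturatedSet K ∧ IsLindelof K) →
    CntFilteredFam S → ∀ U : Set X, IsOpen U → ⋂₀ S ⊆ U → ∃ K ∈ S, K ⊆ U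

/-! Choose, for every point outside `⋂₀ S`, a member of `S` missing it. Over a countable type these
are countably many members, so a common lower bound in `S` lies inside `⋂₀ S`. -/

theorem CntFilteredFam.nonempty {X : Type u} {S : Set (Set X)} (hS : CntFilteredFam S) :
    S.Nonempty := by
  obtain ⟨L, hL, -⟩ := hS ∅ (Set.empty_subset S) Set.countable_empty
  exact ⟨L, hL⟩

theorem CntFilteredFam.exists_subset_sInter {X : Type u} [Countable X] {S : Set (Set X)}
    (hS : CntFilteredFam S) : ∃ L ∈ S, L ⊆ ⋂₀ S := by
  have hwitness : ∀ x, ∃ K ∈ S, x ∈ K → x ∈ ⋂₀ S := by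
    intro x
    by_cases hx : x ∈ ⋂₀ S
    · obtain ⟨K, hK⟩ := hS.nonempty
      exact ⟨K, hK, fun _ => hx⟩
    · obtain ⟨K, hK, hxK⟩ : ∃ K ∈ S, x ∉ K := by simpa [Set.mem_sInter] using hx
      exact ⟨K, hK, fun hx' => absurd hx' hxK⟩
  choose f hfS hf using hwitness
  obtain ⟨L, hLS, hLf⟩ := hS (Set.range f) (Set.range_subset_iff.mpr hfS) (Set.countable_range f)
  exact ⟨L, hLS, fun x hxL => hf x (hLf (f x) ⟨x, rfl⟩ hxL)⟩

/-- every topological space on a countable set is c-well-filtered. -/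
theorem stmt4 (X : Type u) [TopologicalSpace X] [Countable X] : CWellFiltered X := by
  intro S _ hS U _ hSU
  obtain ⟨L, hLS, hL⟩ := hS.exists_subset_sInter
  exact ⟨L, hLS, hL.trans hSU⟩
end

section
/- The real line ℝ with the co-countable topology (open sets are ∅ and complements of countable sets) is not c-well-filtered; in fact, every subset of ℝ is a saturated Lindelöf set in this topology, and the family {ℝ \ C : C countable} is a countably filtered family of saturated Lindelöf sets with empty intersection but no member equal to ∅. -/
universe u

/-- The co-countable topology on `ℝ`: open sets are `∅` and the cocountable sets. -/
def cocountableTopology : TopologicalSpace ℝ where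
  IsOpen U := U = ∅ ∨ Uᶜ.Countable
  isOpen_univ := Or.inr (by simp)
  isOpen_inter := by
    rintro s t (rfl | hs) ht
    · exact Or.inl (Set.empty_inter t)
    · rcases ht with rfl | ht
      · exact Or.inl (Set.inter_empty s)
      · exact Or.inr (by rw [Set.compl_inter]; exact hs.union ht)
  isOpen_sUnion := by
    intro S hS
    by_cases h : ∃ s ∈ S, s ≠ ∅
    · obtain ⟨s, hsS, hs⟩ := h
      rcases hS s hsS with rfl | hc
      · exact absurd rfl hs
      · exact Or.inr (Set.Countable.mono
          (Set.compl_subset_compl.2 (Set.subset_sUnion_of_mem hsS)) hc)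
    · push_neg at h
      exact Or.inl (Set.sUnion_eq_empty.2 h)

/-! In the co-countable topology singletons are closed, so every set is saturated, and a
nonempty open set leaves out only countably many points, so one member of an open cover
together with countably many more covers any set. The co-countable sets are closed under
countable intersections but have empty intersection, which refutes c-well-filteredness
with `U = ∅`. -/

open Set

theorem isSaturatedSet_of_t1Space {X : Type*} [TopologicalSpace X] [T1Space X] (A : Set X) :
    IsSaturatedSet A :=
  (nhdsKer_def A ▸ nhdsKer_eq_of_t1Space A).symm

theorem isLindelof_of_forall_isOpen_countable_compl {X : Type*} [TopologicalSpace X]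
    (hX : ∀ U : Set X, IsOpen U → U.Nonempty → Uᶜ.Countable) (A : Set X) : IsLindelof A := by
  rcases A.eq_empty_or_nonempty with rfl | ⟨a, ha⟩
  · exact isLindelof_empty
  refine isLindelof_of_countable_subcover fun U hUo hAU => ?_
  obtain ⟨i, hi⟩ := mem_iUnion.1 (hAU ha)
  have hrest : IsLindelof (A \ U i) :=
    ((hX _ (hUo i) ⟨a, hi⟩).mono fun _ hx => hx.2).isLindelof
  obtain ⟨r, hr, hcover⟩ := hrest.elim_countable_subcover U hUo (sdiff_subset.trans hAU)
  refine ⟨insert i r, hr.insert i, fun x hx => ?_⟩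
  by_cases hxi : x ∈ U i
  · exact mem_biUnion (mem_insert i r) hxi
  · obtain ⟨j, hj, hxj⟩ := mem_iUnion₂.1 (hcover ⟨hx, hxi⟩)
    exact mem_biUnion (mem_insert_of_mem i hj) hxj

theorem not_cWellFiltered_of_sInter_eq_empty {X : Type*} [TopologicalSpace X]
    {S : Set (Set X)} (hS : ∀ K ∈ S, IsSaturatedSet K ∧ IsLindelof K) (hfil : CntFilteredFam S)
    (hempty : ⋂₀ S = ∅) (hne : ∀ K ∈ S, K ≠ ∅) : ¬ CWellFiltered X := fun hwf => by
  obtain ⟨K, hK, hKU⟩ := hwf S hS hfil ∅ isOpen_empty hempty.subset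
  exact hne K hK (subset_empty_iff.1 hKU)

section Cocountable

variable {X : Type*}

theorem mem_cocountable_iff {U : Set X} :
    U ∈ {U : Set X | ∃ C : Set X, C.Countable ∧ U = Cᶜ} ↔ Uᶜ.Countable :=
  ⟨by rintro ⟨C, hC, rfl⟩; rwa [compl_compl], fun h => ⟨Uᶜ, h, (compl_compl U).symm⟩⟩

theorem cntFilteredFam_cocountable :
    CntFilteredFam {U : Set X | ∃ C : Set X, C.Countable ∧ U = Cᶜ} := by
  intro T hT hTc
  refine ⟨⋂₀ T, mem_cocountable_iff.2 ?_, fun t ht => sInter_subset_of_mem ht⟩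
  rw [compl_sInter]
  exact (hTc.image _).sUnion (forall_mem_image.2 fun t ht => mem_cocountable_iff.1 (hT ht))

theorem sInter_cocountable_eq_empty :
    ⋂₀ {U : Set X | ∃ C : Set X, C.Countable ∧ U = Cᶜ} = ∅ :=
  eq_empty_of_forall_notMem fun x hx =>
    hx {x}ᶜ ⟨{x}, countable_singleton x, rfl⟩ (mem_singleton x)

theorem ne_empty_of_mem_cocountable [Uncountable X] :
    ∀ K ∈ {U : Set X | ∃ C : Set X, C.Countable ∧ U = Cᶜ}, K ≠ ∅ := by
  rintro K hK rfl
  exact not_countable_univ (compl_empty (α := X) ▸ mem_cocountable_iff.1 hK)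

end Cocountable

theorem cocountableTopology_t1Space : @T1Space ℝ cocountableTopology :=
  letI := cocountableTopology
  ⟨fun x => isOpen_compl_iff.1 (Or.inr (by rw [compl_compl]; exact countable_singleton x))⟩

theorem cocountableTopology_countable_compl_of_isOpen (U : Set ℝ)
    (hU : @IsOpen ℝ cocountableTopology U) (hne : U.Nonempty) : Uᶜ.Countable :=
  hU.resolve_left hne.ne_empty

/-- in the co-countable topology on `ℝ`, every subset is a saturated
Lindelöf set, the family of cocountable sets is countably filtered with empty
intersection yet no empty member, and the space is not c-well-filtered. -/
theorem stmt6 :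
    (∀ A : Set ℝ, @IsSaturatedSet ℝ cocountableTopology A ∧ @IsLindelof ℝ cocountableTopology A) ∧
    CntFilteredFam {U : Set ℝ | ∃ C : Set ℝ, C.Countable ∧ U = Cᶜ} ∧
    ⋂₀ {U : Set ℝ | ∃ C : Set ℝ, C.Countable ∧ U = Cᶜ} = ∅ ∧
    (∀ K ∈ {U : Set ℝ | ∃ C : Set ℝ, C.Countable ∧ U = Cᶜ}, K ≠ (∅ : Set ℝ)) ∧
    ¬ @CWellFiltered ℝ cocountableTopology := by
  let := cocountableTopology
  have := cocountableTopology_t1Space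
  have hall (A : Set ℝ) : IsSaturatedSet A ∧ IsLindelof A :=
    ⟨isSaturatedSet_of_t1Space A,
      isLindelof_of_forall_isOpen_countable_compl cocountableTopology_countable_compl_of_isOpen A⟩
  exact ⟨hall, cntFilteredFam_cocountable, sInter_cocountable_eq_empty,
    ne_empty_of_mem_cocountable, not_cWellFiltered_of_sInter_eq_empty (fun K _ => hall K)
      cntFilteredFam_cocountable sInter_cocountable_eq_empty ne_empty_of_mem_cocountable⟩
end

section
/- Let (X, τ) be a c-well-filtered T₀-space. Then X with the specialization order is a countably directed complete poset (every countably directed subset has a least upper bound), and every open set of X is σ-Scott open with respect to the specialization order. -/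
universe u

/-- A subset `D` is countably directed w.r.t. `le` if every countable subset of `D`
has an upper bound in `D`. -/
def CntDirected {α : Type u} (le : α → α → Prop) (D : Set α) : Prop :=
  ∀ E ⊆ D, E.Countable → ∃ d ∈ D, ∀ e ∈ E, le e d

/-- `a` is a least upper bound of `D` w.r.t. `le`. -/
def RIsLUB {α : Type u} (le : α → α → Prop) (D : Set α) (a : α) : Prop :=
  (∀ d ∈ D, le d a) ∧ ∀ b, (∀ d ∈ D, le d b) → le a b

/-- Countably directed complete: every countably directed subset has a least upper bound. -/
def CDComplete {α : Type u} (le : α → α → Prop) : Prop :=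
  ∀ D : Set α, CntDirected le D → ∃ a, RIsLUB le D a

/-- `x` is countably way-below `y`. -/
def CWayBelow {α : Type u} (le : α → α → Prop) (x y : α) : Prop :=
  ∀ D : Set α, CntDirected le D → ∀ a, RIsLUB le D a → le y a → ∃ d ∈ D, le x d

/-- `U` is σ-Scott open: an upper set meeting every countably directed set whose sup lies in `U`. -/
def SigmaScottOpenRel {α : Type u} (le : α → α → Prop) (U : Set α) : Prop :=
  (∀ x ∈ U, ∀ y, le x y → y ∈ U) ∧
  ∀ D : Set α, CntDirected le D → ∀ a, RIsLUB le D a → a ∈ U → ∃ d ∈ D, d ∈ U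

/-- `F` is countably filtered w.r.t. `le`: every countable subset has a lower bound in `F`. -/
def CntFilteredRel {α : Type u} (le : α → α → Prop) (F : Set α) : Prop :=
  ∀ E ⊆ F, E.Countable → ∃ l ∈ F, ∀ e ∈ E, le l e

/-- Countably approximating: countably directed complete and each `x` is the sup of
the countably directed set of elements countably way-below `x`. -/
def CntApprox {α : Type u} (le : α → α → Prop) : Prop :=
  CDComplete le ∧
    ∀ x, CntDirected le {y | CWayBelow le y x} ∧ RIsLUB le {y | CWayBelow le y x} x

/-- `B` is a σ-basis: for each `x`, `B ∩ ⇓꜀x` is countably directed with sup `x`. -/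
def IsSigmaBasis {α : Type u} (le : α → α → Prop) (B : Set α) : Prop :=
  ∀ x, CntDirected le (B ∩ {y | CWayBelow le y x}) ∧
    RIsLUB le (B ∩ {y | CWayBelow le y x}) x

/-- The specialization order of a topological space: `x ≤ y` iff `x ∈ cl {y}`. -/
def sLe {X : Type u} [TopologicalSpace X] (x y : X) : Prop := x ∈ closure ({y} : Set X)

section Aux

variable {X : Type u} [TopologicalSpace X]

lemma sLe_iff' {x y : X} : sLe x y ↔ ∀ U : Set X, IsOpen U → x ∈ U → y ∈ U := by
  constructor
  · intro hcl U hU hx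
    rcases mem_closure_iff.1 hcl U hU hx with ⟨z, hzU, hz⟩
    rcases hz with rfl
    exact hzU
  · intro hh
    exact mem_closure_iff.2 fun o ho hao => ⟨y, hh o ho hao, rfl⟩

lemma sLe_refl (x : X) : sLe x x := subset_closure rfl

lemma sLe_trans {x y z : X} (h1 : sLe x y) (h2 : sLe y z) : sLe x z := by
  rw [sLe_iff'] at *
  exact fun U hU hx => h2 U hU (h1 U hU hx)

/-- The saturation of a point: its up-set under the specialization order. -/
def ups (d : X) : Set X := {y | sLe d y}

lemma self_mem_ups (d : X) : d ∈ ups d := sLe_refl d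

lemma ups_subset_open {d : X} {U : Set X} (hU : IsOpen U) (hd : d ∈ U) : ups d ⊆ U :=
  fun _ hy => sLe_iff'.1 hy U hU hd

lemma ups_anti {d e : X} (h : sLe d e) : ups e ⊆ ups d :=
  fun _ hy => sLe_trans h hy

lemma ups_saturated (d : X) : IsSaturatedSet (ups d) := by
  apply Set.Subset.antisymm
  · intro x hx U hU
    exact hU.2 hx
  · intro x hx
    refine sLe_iff'.2 fun U hU hdU => ?_
    exact hx U ⟨hU, ups_subset_open hU hdU⟩

lemma ups_lindelof (d : X) : IsLindelof (ups d) := by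
  intro f hne hci hf
  refine ⟨d, self_mem_ups d, clusterPt_iff_nonempty.2 ?_⟩
  intro U hU V hV
  rcases mem_nhds_iff.1 hU with ⟨W, hWU, hWopen, hdW⟩
  have hups : ups d ∈ f := hf (Filter.mem_principal_self _)
  have hne' : (V ∩ ups d).Nonempty := Filter.nonempty_of_mem (f.inter_sets hV hups)
  rcases hne' with ⟨x, hxV, hxu⟩
  exact ⟨x, hWU (ups_subset_open hWopen hdW hxu), hxV⟩

/-- Key lemma: in a c-well-filtered space, every countably directed set has a least
upper bound under the specialization order. -/
lemma key (h : CWellFiltered X) (D : Set X) (hD : CntDirected (sLe (X := X)) D) :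
    ∃ a, (∀ d ∈ D, sLe d a) ∧ ∀ b, (∀ d ∈ D, sLe d b) → sLe a b := by
  classical
  set A : Set X := {x | ∀ d ∈ D, sLe d x} with hA
  set S : Set (Set X) := (fun d => ups d) '' D with hS
  have hmem : ∀ K ∈ S, IsSaturatedSet K ∧ IsLindelof K := by
    rintro K ⟨d, _, rfl⟩
    exact ⟨ups_saturated d, ups_lindelof d⟩
  have hfilt : CntFilteredFam S := by
    intro T hTS hTc
    have hc : ∀ t : T, ∃ d ∈ D, ups d = (t : Set X) := fun t => hTS t.2
    choose g hg1 hg2 using hc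
    have : Countable T := hTc.to_subtype
    obtain ⟨u, huD, hub⟩ := hD (Set.range g) (by rintro _ ⟨t, rfl⟩; exact hg1 t)
      (Set.countable_range g)
    refine ⟨ups u, ⟨u, huD, rfl⟩, fun t ht => ?_⟩
    have e : ups (g ⟨t, ht⟩) = t := hg2 ⟨t, ht⟩
    exact e ▸ ups_anti (hub _ ⟨⟨t, ht⟩, rfl⟩)
  have hInter : ⋂₀ S = A := by
    ext x
    constructor
    · intro hx d hd
      exact hx (ups d) ⟨d, hd, rfl⟩
    · rintro hx K ⟨d, hd, rfl⟩
      exact hx d hd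
  by_contra hno
  push_neg at hno
  set W : Set X := ⋃ b ∈ A, (closure ({b} : Set X))ᶜ with hW
  have hWopen : IsOpen W := isOpen_biUnion fun b _ => isClosed_closure.isOpen_compl
  have hAW : ⋂₀ S ⊆ W := by
    rw [hInter]
    intro a ha
    obtain ⟨b, hbA, hnab⟩ := hno a ha
    exact Set.mem_biUnion hbA hnab
  obtain ⟨K, hKS, hKW⟩ := h S hmem hfilt W hWopen hAW
  obtain ⟨d, hdD, rfl⟩ := hKS
  have hdW : d ∈ W := hKW (self_mem_ups d)
  rcases Set.mem_iUnion₂.1 hdW with ⟨b, hbA, hdb⟩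
  exact hdb (hbA d hdD)

end Aux

/-- a c-well-filtered T₀-space is a countably directed complete poset
under the specialization order, and every open set is σ-Scott open. -/
theorem stmt9 {X : Type u} [TopologicalSpace X] [T0Space X] (h : CWellFiltered X) :
    CDComplete (sLe (X := X)) ∧
      ∀ U : Set X, IsOpen U → SigmaScottOpenRel (sLe (X := X)) U := by
  classical
  constructor
  · intro D hD
    obtain ⟨a, h1, h2⟩ := key h D hD
    exact ⟨a, h1, h2⟩
  · intro U hU
    constructor
    · intro x hx y hxy
      exact sLe_iff'.1 hxy U hU hx
    · intro D hD a ha haU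
      obtain ⟨a0, h1, h2⟩ := key h D hD
      have haa0 : sLe a a0 := ha.2 a0 h1
      have ha0U : a0 ∈ U := sLe_iff'.1 haa0 U hU haU
      set S : Set (Set X) := (fun d => ups d) '' D with hS
      have hmem : ∀ K ∈ S, IsSaturatedSet K ∧ IsLindelof K := by
        rintro K ⟨d, _, rfl⟩
        exact ⟨ups_saturated d, ups_lindelof d⟩
      have hfilt : CntFilteredFam S := by
        intro T hTS hTc
        have hc : ∀ t : T, ∃ d ∈ D, ups d = (t : Set X) := fun t => hTS t.2
        choose g hg1 hg2 using hc
        have : Countable T := hTc.to_subtype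
        obtain ⟨u, huD, hub⟩ := hD (Set.range g) (by rintro _ ⟨t, rfl⟩; exact hg1 t)
          (Set.countable_range g)
        refine ⟨ups u, ⟨u, huD, rfl⟩, fun t ht => ?_⟩
        have e : ups (g ⟨t, ht⟩) = t := hg2 ⟨t, ht⟩
        exact e ▸ ups_anti (hub _ ⟨⟨t, ht⟩, rfl⟩)
      have hsub : ⋂₀ S ⊆ U := by
        intro x hx
        have hxA : ∀ d ∈ D, sLe d x := by
          intro d hd
          exact hx (ups d) ⟨d, hd, rfl⟩
        exact sLe_iff'.1 (h2 x hxA) U hU ha0U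
      obtain ⟨K, hKS, hKU⟩ := h S hmem hfilt U hU hsub
      obtain ⟨d, hdD, rfl⟩ := hKS
      exact ⟨d, hdD, hKU (self_mem_ups d)⟩
end

section
/- If (X, τ) is a c-well-filtered space and A is a saturated subset of X, then the subspace (A, τ_A) is c-well-filtered. -/
universe u

namespace Stmt10Aux

variable {X : Type u} [TopologicalSpace X]

/-- The saturation of a set. -/
def sat (B : Set X) : Set X := ⋂₀ {V : Set X | IsOpen V ∧ B ⊆ V}

lemma subset_sat (B : Set X) : B ⊆ sat B := fun _ hx _ hV => hV.2 hx

lemma sat_subset {B V : Set X} (hV : IsOpen V) (hBV : B ⊆ V) : sat B ⊆ V :=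
  fun _ hx => hx V ⟨hV, hBV⟩

lemma sat_mono {B C : Set X} (hBC : B ⊆ C) : sat B ⊆ sat C :=
  fun _ hx V hV => hx V ⟨hV.1, hBC.trans hV.2⟩

lemma isSaturated_sat (B : Set X) : IsSaturatedSet (sat B) := by
  apply subset_antisymm
  · exact fun x hx V hV => hV.2 hx
  · exact fun x hx V hV => hx V ⟨hV.1, sat_subset hV.1 hV.2⟩

lemma isLindelof_sat {B : Set X} (hB : IsLindelof B) : IsLindelof (sat B) := by
  rw [isLindelof_iff_countable_subcover]
  intro ι U hUo hsU
  obtain ⟨t, htc, htsub⟩ := hB.elim_countable_subcover U hUo ((subset_sat B).trans hsU)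
  exact ⟨t, htc, sat_subset (isOpen_biUnion fun i _ => hUo i) htsub⟩

end Stmt10Aux

open Stmt10Aux in
/-- a saturated subspace of a c-well-filtered space is c-well-filtered. -/
theorem stmt10 {X : Type u} [TopologicalSpace X] (h : CWellFiltered X)
    (A : Set X) (hA : IsSaturatedSet A) : CWellFiltered A := by
  intro S hS hfil U hU hinter
  obtain ⟨U', hU'o, hU'eq⟩ := isOpen_induced_iff.mp hU
  -- the pushed-forward family
  set S' : Set (Set X) := (fun K : Set A => sat (Subtype.val '' K)) '' S with hS'def
  -- saturation of a subset of A is contained in A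
  have hsatA : ∀ B : Set X, B ⊆ A → sat B ⊆ A := by
    intro B hBA x hx
    rw [hA]
    exact fun V hV => hx V ⟨hV.1, hBA.trans hV.2⟩
  -- pullback: a point of A in the saturation of the image of a saturated K lies in K
  have hpull : ∀ K ∈ S, ∀ x : X, x ∈ sat (Subtype.val '' K) → ∀ hxA : x ∈ A,
      (⟨x, hxA⟩ : A) ∈ K := by
    intro K hK x hx hxA
    have hKsat := (hS K hK).1
    rw [hKsat]
    rintro W ⟨hWo, hKW⟩
    obtain ⟨V, hVo, rfl⟩ := isOpen_induced_iff.mp hWo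
    have : Subtype.val '' K ⊆ V := by
      rintro _ ⟨y, hy, rfl⟩; exact hKW hy
    exact hx V ⟨hVo, this⟩
  -- properties of S'
  have hS' : ∀ K' ∈ S', IsSaturatedSet K' ∧ IsLindelof K' := by
    rintro _ ⟨K, hK, rfl⟩
    exact ⟨isSaturated_sat _, isLindelof_sat ((hS K hK).2.image continuous_subtype_val)⟩
  have hfil' : CntFilteredFam S' := by
    intro T' hT'sub hT'cnt
    have hch : ∀ t ∈ T', ∃ K ∈ S, sat (Subtype.val '' K) = t := by
      intro t ht
      obtain ⟨K, hK, hKt⟩ := hT'sub ht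
      exact ⟨K, hK, hKt⟩
    choose! g hgS hgt using hch
    obtain ⟨L, hLS, hL⟩ := hfil (g '' T')
      (by rintro _ ⟨t, ht, rfl⟩; exact hgS t ht) (hT'cnt.image g)
    refine ⟨sat (Subtype.val '' L), ⟨L, hLS, rfl⟩, ?_⟩
    intro t ht
    rw [← hgt t ht]
    exact sat_mono (Set.image_mono (hL _ (Set.mem_image_of_mem g ht)))
  -- S is nonempty
  obtain ⟨K0, hK0, -⟩ := hfil ∅ (Set.empty_subset _) Set.countable_empty
  -- intersection condition
  have hinter' : ⋂₀ S' ⊆ U' := by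
    intro x hx
    have hxA : x ∈ A := hsatA _ (Set.image_subset_iff.mpr fun y _ => y.2)
      (hx _ ⟨K0, hK0, rfl⟩)
    have : (⟨x, hxA⟩ : A) ∈ ⋂₀ S := by
      intro K hK
      exact hpull K hK x (hx _ ⟨K, hK, rfl⟩) hxA
    have hxU : (⟨x, hxA⟩ : A) ∈ U := hinter this
    rw [← hU'eq] at hxU
    exact hxU
  obtain ⟨K', hK'S', hK'U'⟩ := h S' hS' hfil' U' hU'o hinter'
  obtain ⟨K, hK, rfl⟩ := hK'S'
  refine ⟨K, hK, ?_⟩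
  intro x hx
  rw [← hU'eq]
  exact hK'U' (subset_sat _ (Set.mem_image_of_mem _ hx))
end

section
/- A retract of a c-well-filtered space is c-well-filtered. That is, if Y is c-well-filtered and there are continuous maps r : Y → X and s : X → Y with r ∘ s = id_X, then X is c-well-filtered. -/
universe u

/-- The saturation of a set. -/
def satn {X : Type u} [TopologicalSpace X] (A : Set X) : Set X :=
  ⋂₀ {U : Set X | IsOpen U ∧ A ⊆ U}

lemma subset_satn {X : Type u} [TopologicalSpace X] (A : Set X) : A ⊆ satn A :=
  fun x hx => Set.mem_sInter.2 fun _ hU => hU.2 hx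

lemma satn_subset {X : Type u} [TopologicalSpace X] {A U : Set X} (hU : IsOpen U)
    (h : A ⊆ U) : satn A ⊆ U :=
  Set.sInter_subset_of_mem ⟨hU, h⟩

lemma satn_mono {X : Type u} [TopologicalSpace X] {A B : Set X} (h : A ⊆ B) :
    satn A ⊆ satn B :=
  Set.sInter_subset_sInter fun _ hU => ⟨hU.1, h.trans hU.2⟩

lemma isSaturated_satn {X : Type u} [TopologicalSpace X] (A : Set X) :
    IsSaturatedSet (satn A) := by
  apply Set.Subset.antisymm
  · exact fun x hx => Set.mem_sInter.2 fun U hU => hU.2 hx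
  · exact Set.sInter_subset_sInter fun U hU => ⟨hU.1, satn_subset hU.1 hU.2⟩

lemma isLindelof_satn {X : Type u} [TopologicalSpace X] {A : Set X} (hA : IsLindelof A) :
    IsLindelof (satn A) := by
  apply isLindelof_of_countable_subcover
  intro ι U hUo hsU
  obtain ⟨t, ht, hcov⟩ := hA.elim_countable_subcover U hUo ((subset_satn A).trans hsU)
  exact ⟨t, ht, satn_subset (isOpen_biUnion fun i _ => hUo i) hcov⟩

/-- a retract of a c-well-filtered space is c-well-filtered. -/
theorem stmt11 {X Y : Type u} [TopologicalSpace X] [TopologicalSpace Y]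
    (hY : CWellFiltered Y) (r : Y → X) (s : X → Y)
    (hr : Continuous r) (hs : Continuous s) (hrs : r ∘ s = id) :
    CWellFiltered X := by
  intro S hSK hSfilt U hU hSU
  have hrsx : ∀ x : X, r (s x) = x := fun x => congrFun hrs x
  set S' : Set (Set Y) := (fun K => satn (s '' K)) '' S with hS'
  -- key: any point of satn (s '' K) maps under r into K (K saturated)
  have key : ∀ K ∈ S, ∀ y ∈ satn (s '' K), r y ∈ K := by
    intro K hK y hy
    have hsat := (hSK K hK).1
    rw [hsat]
    refine Set.mem_sInter.2 fun W hW => ?_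
    have : satn (s '' K) ⊆ r ⁻¹' W := by
      apply satn_subset (hW.1.preimage hr)
      rintro _ ⟨x, hx, rfl⟩
      simp only [Set.mem_preimage, hrsx]
      exact hW.2 hx
    exact this hy
  have hS'prop : ∀ K ∈ S', IsSaturatedSet K ∧ IsLindelof K := by
    rintro _ ⟨K, hK, rfl⟩
    exact ⟨isSaturated_satn _, isLindelof_satn ((hSK K hK).2.image hs)⟩
  have hS'filt : CntFilteredFam S' := by
    intro T' hT' hT'c
    have : ∀ t ∈ T', ∃ K ∈ S, satn (s '' K) = t := fun t ht => hT' ht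
    choose f hf1 hf2 using this
    obtain ⟨L, hL, hLsub⟩ := hSfilt {K | ∃ t, ∃ ht : t ∈ T', f t ht = K}
      (by rintro K ⟨t, ht, rfl⟩; exact hf1 t ht)
      (by
        have hc := hT'c.to_subtype
        have hsub : {K | ∃ t, ∃ ht : t ∈ T', f t ht = K} ⊆
            Set.range (fun p : {t // t ∈ T'} => f p.1 p.2) := by
          rintro K ⟨t, ht, rfl⟩; exact ⟨⟨t, ht⟩, rfl⟩
        exact (Set.countable_range _).mono hsub)
    refine ⟨satn (s '' L), ⟨L, hL, rfl⟩, fun t ht => ?_⟩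
    rw [← hf2 t ht]
    exact satn_mono (Set.image_mono (f := s) (hLsub _ ⟨t, ht, rfl⟩))
  have hinter : ⋂₀ S' ⊆ r ⁻¹' U := by
    intro y hy
    apply hSU
    refine Set.mem_sInter.2 fun K hK => ?_
    exact key K hK y (Set.mem_sInter.1 hy _ ⟨K, hK, rfl⟩)
  obtain ⟨_, ⟨L, hL, rfl⟩, hLsub⟩ := hY S' hS'prop hS'filt (r ⁻¹' U) (hU.preimage hr) hinter
  refine ⟨L, hL, fun x hx => ?_⟩
  have : s x ∈ satn (s '' L) := subset_satn _ ⟨x, hx, rfl⟩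
  have := hLsub this
  rwa [Set.mem_preimage, hrsx] at this
end

section
/- Let L be a countably approximating poset with a countable σ-basis B. Then L with the σ-Scott topology is a c-well-filtered space. -/
universe u

/-- The σ-Scott topology on a preorder. -/
def sigmaScottTopology (L : Type u) [Preorder L] : TopologicalSpace L where
  IsOpen U := SigmaScottOpenRel (· ≤ · : L → L → Prop) U
  isOpen_univ := by
    refine ⟨fun _ _ _ _ => trivial, ?_⟩
    intro D hD a _ _
    obtain ⟨d, hd, -⟩ := hD ∅ (Set.empty_subset D) Set.countable_empty
    exact ⟨d, hd, trivial⟩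
  isOpen_inter := by
    rintro s t ⟨hsu, hs⟩ ⟨htu, ht⟩
    refine ⟨fun x hx y hxy => ⟨hsu x hx.1 y hxy, htu x hx.2 y hxy⟩, ?_⟩
    intro D hD a ha haU
    obtain ⟨d1, hd1, hd1s⟩ := hs D hD a ha haU.1
    obtain ⟨d2, hd2, hd2t⟩ := ht D hD a ha haU.2
    obtain ⟨d3, hd3, h3⟩ := hD {d1, d2} (by rintro e (rfl | rfl) <;> assumption)
      ((Set.finite_singleton d2).insert d1).countable
    exact ⟨d3, hd3, hsu d1 hd1s d3 (h3 d1 (by simp)), htu d2 hd2t d3 (h3 d2 (by simp))⟩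
  isOpen_sUnion := by
    intro S hS
    refine ⟨?_, ?_⟩
    · intro x hx y hxy
      obtain ⟨s, hsS, hxs⟩ := hx
      exact ⟨s, hsS, (hS s hsS).1 x hxs y hxy⟩
    · intro D hD a ha haU
      obtain ⟨s, hsS, has⟩ := haU
      obtain ⟨d, hd, hds⟩ := (hS s hsS).2 D hD a ha has
      exact ⟨d, hd, s, hsS, hds⟩

/-!
Countable intersections of σ-Scott open sets are σ-Scott open. Let `S` be a countably filtered
family of saturated sets with `⋂₀ S ⊆ U`. By saturation, each of the countably many basis elements
outside `⋂₀ S` is kept out of some open set containing a member of `S`; a member `K` of `S` below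
all of these members lies in the intersection `W` of these open sets, and `W` is open. For
`x ∈ K`, the σ-Scott open `W ∋ x` contains some basis element `b` countably way below `x`; then
`b ∈ ⋂₀ S ⊆ U`, and `x ∈ U` because `U` is an upper set.
-/

theorem CWayBelow.rel {α : Type u} {le : α → α → Prop} [Std.Refl le] {b x : α}
    (h : CWayBelow le b x) : le b x := by
  have hdir : CntDirected le {x} := fun E hE _ =>
    ⟨x, rfl, fun e he => hE he ▸ refl_of le x⟩
  have hlub : RIsLUB le {x} x := ⟨fun d hd => hd ▸ refl_of le x, fun c hc => hc x rfl⟩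
  obtain ⟨d, rfl, hbd⟩ := h {x} hdir x hlub (refl_of le x)
  exact hbd

theorem SigmaScottOpenRel.sInter {α : Type u} {le : α → α → Prop} {𝒱 : Set (Set α)}
    (h𝒱 : 𝒱.Countable) (hV : ∀ V ∈ 𝒱, SigmaScottOpenRel le V) :
    SigmaScottOpenRel le (⋂₀ 𝒱) := by
  refine ⟨fun x hx y hxy V hV𝒱 => (hV V hV𝒱).1 x (hx V hV𝒱) y hxy, ?_⟩
  intro D hD a ha haV
  have : ∀ V : 𝒱, ∃ d ∈ D, d ∈ (V : Set α) := fun V => (hV V V.2).2 D hD a ha (haV V V.2)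
  choose f hfD hfV using this
  have := h𝒱.to_subtype
  obtain ⟨d, hdD, hfd⟩ := hD (Set.range f) (Set.range_subset_iff.2 hfD) (Set.countable_range f)
  exact ⟨d, hdD, fun V hV𝒱 =>
    (hV V hV𝒱).1 (f ⟨V, hV𝒱⟩) (hfV ⟨V, hV𝒱⟩) d (hfd _ ⟨⟨V, hV𝒱⟩, rfl⟩)⟩

section Topology

variable {X : Type u} [TopologicalSpace X]

theorem IsSaturatedSet.exists_isOpen_notMem {K : Set X} (hK : IsSaturatedSet K) {x : X}
    (hx : x ∉ K) : ∃ V, IsOpen V ∧ K ⊆ V ∧ x ∉ V := by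
  rw [hK] at hx
  simp only [Set.mem_sInter, not_forall] at hx
  obtain ⟨V, ⟨hV, hKV⟩, hxV⟩ := hx
  exact ⟨V, hV, hKV, hxV⟩

theorem CntFilteredFam.exists_subset_isOpen_inter_subset_sInter
    (hX : ∀ 𝒱 : Set (Set X), 𝒱.Countable → (∀ V ∈ 𝒱, IsOpen V) → IsOpen (⋂₀ 𝒱))
    {S : Set (Set X)} (hS : CntFilteredFam S) (hsat : ∀ K ∈ S, IsSaturatedSet K)
    {C : Set X} (hC : C.Countable) :
    ∃ K ∈ S, ∃ W, IsOpen W ∧ K ⊆ W ∧ C ∩ W ⊆ ⋂₀ S := by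
  obtain ⟨K₀, hK₀S, -⟩ := hS ∅ (Set.empty_subset S) Set.countable_empty
  have : ∀ c : C, ∃ V, IsOpen V ∧ (∃ K ∈ S, K ⊆ V) ∧ ((c : X) ∈ V → (c : X) ∈ ⋂₀ S) := by
    intro c
    by_cases hc : (c : X) ∈ ⋂₀ S
    · exact ⟨Set.univ, isOpen_univ, ⟨K₀, hK₀S, Set.subset_univ K₀⟩, fun _ => hc⟩
    · simp only [Set.mem_sInter, not_forall] at hc
      obtain ⟨K, hKS, hcK⟩ := hc
      obtain ⟨V, hV, hKV, hcV⟩ := (hsat K hKS).exists_isOpen_notMem hcK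
      exact ⟨V, hV, ⟨K, hKS, hKV⟩, fun h => absurd h hcV⟩
  choose V hV hSV hVC using this
  choose K hKS hKV using hSV
  have := hC.to_subtype
  obtain ⟨K₁, hK₁S, hK₁K⟩ := hS (Set.range K) (Set.range_subset_iff.2 hKS) (Set.countable_range K)
  refine ⟨K₁, hK₁S, ⋂₀ Set.range V, hX _ (Set.countable_range V) (Set.forall_mem_range.2 hV),
    fun x hx => Set.mem_sInter.2 (Set.forall_mem_range.2 fun c =>
      hKV c (hK₁K _ ⟨c, rfl⟩ hx)), ?_⟩
  rintro c ⟨hcC, hcW⟩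
  exact hVC ⟨c, hcC⟩ (hcW _ ⟨⟨c, hcC⟩, rfl⟩)

end Topology

theorem stmt14_general {L : Type u} [PartialOrder L]
    (B : Set L) (hB : B.Countable) (hBasis : IsSigmaBasis ((· ≤ ·) : L → L → Prop) B) :
    @CWellFiltered L (sigmaScottTopology L) := by
  let _ := sigmaScottTopology L
  have hσ : ∀ 𝒱 : Set (Set L), 𝒱.Countable → (∀ V ∈ 𝒱, IsOpen V) → IsOpen (⋂₀ 𝒱) :=
    fun _ h𝒱 hV => SigmaScottOpenRel.sInter h𝒱 hV
  intro S hS hSfil U hU hSU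
  obtain ⟨K, hKS, W, hW, hKW, hBW⟩ :=
    hSfil.exists_subset_isOpen_inter_subset_sInter hσ (fun K hK => (hS K hK).1) hB
  refine ⟨K, hKS, fun x hxK => ?_⟩
  obtain ⟨b, ⟨hbB, hbx⟩, hbW⟩ := hW.2 _ (hBasis x).1 x (hBasis x).2 (hKW hxK)
  exact hU.1 b (hSU (hBW ⟨hbB, hbW⟩)) x hbx.rel

/-- a countably approximating poset with a countable σ-basis is
c-well-filtered in its σ-Scott topology. -/
theorem stmt14 {L : Type u} [PartialOrder L]
    (happrox : CntApprox ((· ≤ ·) : L → L → Prop))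
    (B : Set L) (hB : B.Countable) (hBasis : IsSigmaBasis ((· ≤ ·) : L → L → Prop) B) :
    @CWellFiltered L (sigmaScottTopology L) :=
  stmt14_general B hB hBasis
end

section
/- If X is a c-well-filtered space, then for each countably filtered family C of nonempty saturated Lindelöf subsets of X, the intersection ⋂C is a nonempty saturated Lindelöf set. Consequently, the poset (LQ(X), ⊇) of saturated Lindelöf subsets ordered by reverse inclusion is countably directed complete. -/
universe u

/-- The saturated Lindelöf subsets of `X`. -/
def LQ (X : Type u) [TopologicalSpace X] : Type u :=
  {K : Set X // IsSaturatedSet K ∧ IsLindelof K}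

/-- The order of `(LQ(X), ⊇)`: reverse inclusion. -/
def lqLe {X : Type u} [TopologicalSpace X] (A B : LQ X) : Prop := B.1 ⊆ A.1

theorem IsSaturatedSet.sInter {X : Type u} [TopologicalSpace X] {S : Set (Set X)}
    (hS : ∀ K ∈ S, IsSaturatedSet K) : IsSaturatedSet (⋂₀ S) := by
  refine Set.Subset.antisymm (fun x hx U hU => hU.2 hx) fun x hx K hK => ?_
  rw [hS K hK]
  exact fun U hU => hx U ⟨hU.1, (Set.sInter_subset_of_mem hK).trans hU.2⟩

namespace CWellFiltered

variable {X : Type u} [TopologicalSpace X] {S : Set (Set X)}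

/-- An open cover of `⋂₀ S` already covers some member of `S`, which is Lindelöf. -/
theorem isLindelof_sInter (h : CWellFiltered X)
    (hS : ∀ K ∈ S, IsSaturatedSet K ∧ IsLindelof K) (hF : CntFilteredFam S) :
    IsLindelof (⋂₀ S) := by
  rw [isLindelof_iff_countable_subcover]
  intro ι U hUo hcov
  obtain ⟨K, hKS, hKU⟩ := h S hS hF (⋃ i, U i) (isOpen_iUnion hUo) hcov
  obtain ⟨t, htc, htK⟩ := (hS K hKS).2.elim_countable_subcover U hUo hKU
  exact ⟨t, htc, (Set.sInter_subset_of_mem hKS).trans htK⟩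

theorem sInter_nonempty (h : CWellFiltered X)
    (hS : ∀ K ∈ S, IsSaturatedSet K ∧ IsLindelof K) (hne : ∀ K ∈ S, K.Nonempty)
    (hF : CntFilteredFam S) : (⋂₀ S).Nonempty := by
  rw [Set.nonempty_iff_ne_empty]
  intro hempty
  obtain ⟨K, hKS, hK⟩ := h S hS hF ∅ isOpen_empty hempty.subset
  exact (hne K hKS).ne_empty (Set.subset_empty_iff.mp hK)

end CWellFiltered

theorem LQ.cntFilteredFam_image_val {X : Type u} [TopologicalSpace X] {D : Set (LQ X)}
    (hD : CntDirected lqLe D) : CntFilteredFam (Subtype.val '' D) := by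
  intro T hTD hTc
  obtain ⟨d, hdD, hdub⟩ := hD (Subtype.val ⁻¹' T ∩ D) Set.inter_subset_right
    ((hTc.preimage Subtype.val_injective).mono Set.inter_subset_left)
  refine ⟨d.1, Set.mem_image_of_mem _ hdD, fun t htT => ?_⟩
  obtain ⟨e, heD, rfl⟩ := hTD htT
  exact hdub e ⟨htT, heD⟩

theorem LQ.rIsLUB_sInter {X : Type u} [TopologicalSpace X] (D : Set (LQ X))
    (hA : IsSaturatedSet (⋂₀ (Subtype.val '' D)) ∧ IsLindelof (⋂₀ (Subtype.val '' D))) :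
    RIsLUB lqLe D ⟨⋂₀ (Subtype.val '' D), hA⟩ := by
  refine ⟨fun d hdD => Set.sInter_subset_of_mem (Set.mem_image_of_mem _ hdD), fun b hb => ?_⟩
  rintro x hx _ ⟨d, hdD, rfl⟩
  exact hb d hdD hx

/-- in a c-well-filtered space, the intersection of a countably filtered
family of nonempty saturated Lindelöf sets is a nonempty saturated Lindelöf set; hence
`(LQ(X), ⊇)` is countably directed complete. -/
theorem stmt15 {X : Type u} [TopologicalSpace X] (h : CWellFiltered X) :
    (∀ S : Set (Set X), (∀ K ∈ S, IsSaturatedSet K ∧ IsLindelof K ∧ K.Nonempty) →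
      CntFilteredFam S →
        (⋂₀ S).Nonempty ∧ IsSaturatedSet (⋂₀ S) ∧ IsLindelof (⋂₀ S)) ∧
    CDComplete (lqLe (X := X)) := by
  refine ⟨fun S hS hF => ?_, fun D hD => ?_⟩
  · have hSL : ∀ K ∈ S, IsSaturatedSet K ∧ IsLindelof K :=
      fun K hK => ⟨(hS K hK).1, (hS K hK).2.1⟩
    exact ⟨h.sInter_nonempty hSL (fun K hK => (hS K hK).2.2) hF,
      IsSaturatedSet.sInter fun K hK => (hSL K hK).1, h.isLindelof_sInter hSL hF⟩
  · have hval : ∀ K ∈ Subtype.val '' D, IsSaturatedSet K ∧ IsLindelof K := by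
      rintro _ ⟨d, _, rfl⟩
      exact d.2
    exact ⟨_, LQ.rIsLUB_sInter D ⟨IsSaturatedSet.sInter fun K hK => (hval K hK).1,
      h.isLindelof_sInter hval (LQ.cntFilteredFam_image_val hD)⟩⟩
end

section
/- Let X be a locally Lindelöf P-space and K₁, K₂ saturated Lindelöf subsets. If K₁ ≪_c K₂ in (LQ(X), ⊇), then K₂ ⊆ int(K₁), i.e., there is an open U with K₂ ⊆ U ⊆ K₁. -/
/-!
The saturated Lindelöf sets whose interior contains `K₂` form a countably directed subset of
`(LQ(X), ⊇)`: in a P-space the intersection of countably many of their interiors is an open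
neighbourhood of `K₂`, and local Lindelöfness yields a saturated Lindelöf neighbourhood of `K₂`
inside it. By saturation of `K₂` their intersection is `K₂`, so `K₁ ≪_c K₂` puts one of them
inside `K₁`, and then `K₂ ⊆ int K₁`.
-/

universe u

/-- A P-space: every countable intersection of open sets is open. -/
def PSpace (X : Type u) [TopologicalSpace X] : Prop :=
  ∀ 𝒰 : Set (Set X), 𝒰.Countable → (∀ U ∈ 𝒰, IsOpen U) → IsOpen (⋂₀ 𝒰)

/-- Locally Lindelöf: every open neighbourhood contains a saturated Lindelöf
neighbourhood. -/
def LocallyLindelofSp (X : Type u) [TopologicalSpace X] : Prop :=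
  ∀ U : Set X, IsOpen U → ∀ x ∈ U, ∃ K : Set X,
    IsSaturatedSet K ∧ IsLindelof K ∧ x ∈ interior K ∧ K ⊆ U

section

variable {X : Type u} [TopologicalSpace X]

theorem isSaturatedSet_iff {A : Set X} :
    IsSaturatedSet A ↔ ∀ x ∉ A, ∃ U : Set X, IsOpen U ∧ A ⊆ U ∧ x ∉ U := by
  refine ⟨fun hA x hx => ?_, fun h => ?_⟩
  · rw [hA] at hx
    simpa [and_assoc] using hx
  · refine subset_antisymm (fun x hx U hU => hU.2 hx) fun x hx => ?_
    by_contra hxA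
    obtain ⟨U, hUo, hAU, hxU⟩ := h x hxA
    exact hxU (hx U ⟨hUo, hAU⟩)

theorem IsSaturatedSet.iUnion {ι : Sort*} {K : ι → Set X} (h : ∀ i, IsSaturatedSet (K i)) :
    IsSaturatedSet (⋃ i, K i) := by
  refine isSaturatedSet_iff.2 fun x hx => ?_
  have hxK : ∀ i, x ∉ K i := fun i hi => hx (Set.mem_iUnion_of_mem i hi)
  choose V hVo hKV hxV using fun i => isSaturatedSet_iff.1 (h i) x (hxK i)
  exact ⟨⋃ i, V i, isOpen_iUnion hVo, Set.iUnion_mono hKV, by simpa using hxV⟩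

theorem IsSaturatedSet.biUnion {ι : Type*} {t : Set ι} {K : ι → Set X}
    (h : ∀ i ∈ t, IsSaturatedSet (K i)) : IsSaturatedSet (⋃ i ∈ t, K i) :=
  IsSaturatedSet.iUnion fun i => IsSaturatedSet.iUnion fun hi => h i hi

theorem PSpace.isOpen_biInter (hP : PSpace X) {ι : Type*} {s : Set ι} (hs : s.Countable)
    {U : ι → Set X} (hU : ∀ i ∈ s, IsOpen (U i)) : IsOpen (⋂ i ∈ s, U i) := by
  rw [← Set.sInter_image]
  exact hP _ (hs.image U) (Set.forall_mem_image.2 hU)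

theorem LocallyLindelofSp.exists_lindelof_between (hLL : LocallyLindelofSp X)
    {A U : Set X} (hA : IsLindelof A) (hU : IsOpen U) (hAU : A ⊆ U) :
    ∃ K : Set X, IsSaturatedSet K ∧ IsLindelof K ∧ A ⊆ interior K ∧ K ⊆ U := by
  choose K hsat hlin hmem hKU using fun x : A => hLL U hU x (hAU x.2)
  obtain ⟨t, htc, hAt⟩ := hA.elim_countable_subcover (fun x : A => interior (K x))
    (fun _ => isOpen_interior) fun y hy => Set.mem_iUnion.2 ⟨⟨y, hy⟩, hmem ⟨y, hy⟩⟩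
  refine ⟨⋃ x ∈ t, K x, IsSaturatedSet.biUnion fun x _ => hsat x,
    htc.isLindelof_biUnion fun x _ => hlin x, hAt.trans ?_, Set.iUnion₂_subset fun x _ => hKU x⟩
  exact interior_maximal (Set.iUnion₂_mono fun x _ => interior_subset)
    (isOpen_biUnion fun x _ => isOpen_interior)

def lqNhds (K : Set X) : Set (LQ X) := {d | K ⊆ interior d.1}

theorem LocallyLindelofSp.exists_mem_lqNhds_subset (hLL : LocallyLindelofSp X) {K U : Set X}
    (hK : IsLindelof K) (hU : IsOpen U) (hKU : K ⊆ U) : ∃ d ∈ lqNhds K, d.1 ⊆ U := by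
  obtain ⟨L, hsat, hlin, hKL, hLU⟩ := hLL.exists_lindelof_between hK hU hKU
  exact ⟨⟨L, hsat, hlin⟩, hKL, hLU⟩

theorem cntDirected_lqNhds (hLL : LocallyLindelofSp X) (hP : PSpace X) {K : Set X}
    (hK : IsLindelof K) : CntDirected lqLe (lqNhds K) := by
  intro E hE hEc
  have hKE : K ⊆ ⋂ e ∈ E, interior e.1 := Set.subset_iInter₂ fun e he => hE he
  obtain ⟨d, hd, hdE⟩ := hLL.exists_mem_lqNhds_subset hK
    (hP.isOpen_biInter hEc fun _ _ => isOpen_interior) hKE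
  exact ⟨d, hd, fun e he => show d.1 ⊆ e.1 from
    hdE.trans ((Set.biInter_subset_of_mem he).trans interior_subset)⟩

theorem rIsLUB_lqNhds (hLL : LocallyLindelofSp X) (K : LQ X) :
    RIsLUB lqLe (lqNhds K.1) K := by
  refine ⟨fun d hd => show K.1 ⊆ d.1 from hd.trans interior_subset, fun b hb x hxb => ?_⟩
  by_contra hxK
  obtain ⟨U, hUo, hKU, hxU⟩ := isSaturatedSet_iff.1 K.2.1 x hxK
  obtain ⟨d, hd, hdU⟩ := hLL.exists_mem_lqNhds_subset K.2.2 hUo hKU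
  exact hxU (hdU (hb d hd hxb))

end

/-- in a locally Lindelöf P-space, `K₁ ≪꜀ K₂` in `(LQ(X), ⊇)` implies
`K₂ ⊆ int K₁`, i.e. there is an open `U` with `K₂ ⊆ U ⊆ K₁`. -/
theorem stmt17 {X : Type u} [TopologicalSpace X] (hLL : LocallyLindelofSp X)
    (hP : PSpace X) (K₁ K₂ : LQ X) (h : CWayBelow (lqLe (X := X)) K₁ K₂) :
    K₂.1 ⊆ interior K₁.1 ∧ ∃ U : Set X, IsOpen U ∧ K₂.1 ⊆ U ∧ U ⊆ K₁.1 := by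
  obtain ⟨d, hd, hdK₁⟩ := h (lqNhds K₂.1) (cntDirected_lqNhds hLL hP K₂.2.2) K₂
    (rIsLUB_lqNhds hLL K₂) subset_rfl
  have hK₂K₁ : K₂.1 ⊆ interior K₁.1 := hd.trans (interior_mono hdK₁)
  exact ⟨hK₂K₁, interior K₁.1, isOpen_interior, hK₂K₁, interior_subset⟩
end
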